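/- Let a < 0, b < 0, λ > 0, μ > 0, and set α := λa, β := μb. Let u ∈ 𝔥 and define on the interior indices 𝔦: v := −α D₁,₀ u − β D₂,₀ u and w := −(α²/2) Δ₁ u − (β²/2) Δ₂ u − αβ D₁,₀ D₂,₀ u + ((α²+β²)/8) Δ₁ Δ₂ u. Then: (i) 2⟨u ; v⟩_{ℓ²(𝔦)} = −λ|a| ∑_{k≥0} (u_{0,k})² − μ|b| ∑_{j≥0} (u_{j,0})²; and (ii) 2⟨v ; w⟩_{ℓ²(𝔦)} = −(λ|a|·(μb)²/2) ∑_{k≥0} u_{0,k}·(Δ₂ u)_{0,k+1} − ((λa)²·μ|b|/2) ∑_{j≥0} u_{j,0}·(Δ₁ u)_{j+1,0} − (λ|a|·(μb)²/2)·u_{0,0}·(Δ₂ u)_{0,0} − ((λa)²·μ|b|/2)·u_{0,0}·(Δ₁ u)_{0,0}. -/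
import Mathlib


noncomputable section

/-- Forward difference in the first variable. -/
def D1p (u : ℤ → ℤ → ℝ) : ℤ → ℤ → ℝ := fun j k => u (j + 1) k - u j k
/-- Backward difference in the first variable. -/
def D1m (u : ℤ → ℤ → ℝ) : ℤ → ℤ → ℝ := fun j k => u j k - u (j - 1) k
/-- Forward difference in the second variable. -/
def D2p (u : ℤ → ℤ → ℝ) : ℤ → ℤ → ℝ := fun j k => u j (k + 1) - u j k
/-- Backward difference in the second variable. -/
def D2m (u : ℤ → ℤ → ℝ) : ℤ → ℤ → ℝ := fun j k => u j k - u j (k - 1)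
/-- Centered difference in the first variable. -/
def D10 (u : ℤ → ℤ → ℝ) : ℤ → ℤ → ℝ := fun j k => (D1p u j k + D1m u j k) / 2
/-- Centered difference in the second variable. -/
def D20 (u : ℤ → ℤ → ℝ) : ℤ → ℤ → ℝ := fun j k => (D2p u j k + D2m u j k) / 2
/-- Discrete Laplacian in the first variable. -/
def L1 (u : ℤ → ℤ → ℝ) : ℤ → ℤ → ℝ := D1p (D1m u)
/-- Discrete Laplacian in the second variable. -/
def L2 (u : ℤ → ℤ → ℝ) : ℤ → ℤ → ℝ := D2p (D2m u)

/-- Squared ℓ²(ℤ²) norm. -/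
def sqZ (u : ℤ → ℤ → ℝ) : ℝ := ∑' p : ℤ × ℤ, (u p.1 p.2) ^ 2
/-- ℓ²(ℤ²) scalar product. -/
def ipZ (u v : ℤ → ℤ → ℝ) : ℝ := ∑' p : ℤ × ℤ, u p.1 p.2 * v p.1 p.2

/-- Squared ℓ²(𝓘) norm over the interior indices 𝓘 = ℕ × ℤ of the half-space grid. -/
def sqH (u : ℤ → ℤ → ℝ) : ℝ := ∑' p : ℕ × ℤ, (u (p.1 : ℤ) p.2) ^ 2
/-- ℓ²(𝓘) scalar product over the interior indices 𝓘 = ℕ × ℤ. -/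
def ipH (u v : ℤ → ℤ → ℝ) : ℝ := ∑' p : ℕ × ℤ, u (p.1 : ℤ) p.2 * v (p.1 : ℤ) p.2
/-- Membership in ℋ : square-summable on the half-space grid and satisfying the
extrapolation (Neumann) boundary condition `u (-1) k = u 0 k`. -/
def memH (u : ℤ → ℤ → ℝ) : Prop :=
  (∀ k : ℤ, u (-1) k = u 0 k) ∧ Summable (fun p : ℕ × ℤ => (u (p.1 : ℤ) p.2) ^ 2)

/-- Squared ℓ²(𝔦) norm over the interior indices 𝔦 = ℕ × ℕ of the quarter-space grid. -/
def sqQ (u : ℤ → ℤ → ℝ) : ℝ := ∑' p : ℕ × ℕ, (u (p.1 : ℤ) (p.2 : ℤ)) ^ 2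
/-- ℓ²(𝔦) scalar product over the interior indices 𝔦 = ℕ × ℕ. -/
def ipQ (u v : ℤ → ℤ → ℝ) : ℝ :=
  ∑' p : ℕ × ℕ, u (p.1 : ℤ) (p.2 : ℤ) * v (p.1 : ℤ) (p.2 : ℤ)
/-- Membership in 𝔥 : square-summable on the quarter-space grid, satisfying the
extrapolation boundary conditions on both sides and the corner condition. -/
def memQ (u : ℤ → ℤ → ℝ) : Prop :=
  (∀ k : ℤ, -1 ≤ k → u (-1) k = u 0 k) ∧ (∀ j : ℤ, 0 ≤ j → u j (-1) = u j 0) ∧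
    Summable (fun p : ℕ × ℕ => (u (p.1 : ℤ) (p.2 : ℤ)) ^ 2)

/-- The skew-selfadjoint part `v` in the decomposition of the Lax-Wendroff scheme. -/
def vop (α β : ℝ) (u : ℤ → ℤ → ℝ) : ℤ → ℤ → ℝ :=
  fun j k => -α * D10 u j k - β * D20 u j k
/-- The selfadjoint part `w` in the decomposition of the Lax-Wendroff scheme. -/
def wop (α β : ℝ) (u : ℤ → ℤ → ℝ) : ℤ → ℤ → ℝ :=
  fun j k => -(α ^ 2 / 2) * L1 u j k - (β ^ 2 / 2) * L2 u j k
    - α * β * D10 (D20 u) j k + ((α ^ 2 + β ^ 2) / 8) * L1 (L2 u) j k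

namespace QS

def mm (u : ℤ → ℤ → ℝ) (s t s' t' : ℤ) : ℕ × ℕ → ℝ :=
  fun p => u ((p.1 : ℤ) + s) ((p.2 : ℤ) + t) * u ((p.1 : ℤ) + s') ((p.2 : ℤ) + t')

def SS (u : ℤ → ℤ → ℝ) (s t s' t' : ℤ) : ℝ := ∑' p : ℕ × ℕ, mm u s t s' t' p

def Sc (u : ℤ → ℤ → ℝ) (a t b t' : ℤ) : ℝ :=
  ∑' k : ℕ, u a ((k : ℤ) + t) * u b ((k : ℤ) + t')

def Sr (u : ℤ → ℤ → ℝ) (s c s' c' : ℤ) : ℝ :=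
  ∑' j : ℕ, u ((j : ℤ) + s) c * u ((j : ℤ) + s') c'

variable {u : ℤ → ℤ → ℝ}

lemma bc1 (hu : memQ u) {k : ℤ} (hk : -1 ≤ k) : u (-1) k = u 0 k := hu.1 k hk

lemma bc2 (hu : memQ u) {j : ℤ} (hj : -1 ≤ j) : u j (-1) = u j 0 := by
  rcases eq_or_lt_of_le hj with h | h
  · rw [← h]
    rw [bc1 hu (by norm_num), hu.2.1 0 le_rfl, bc1 hu (by norm_num)]
  · exact hu.2.1 j (by omega)

lemma clamp (hu : memQ u) {x y : ℤ} (hx : -1 ≤ x) (hy : -1 ≤ y) :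
    u x y = u x.toNat y.toNat := by
  have hx' : (x.toNat : ℤ) = x ∨ (x = -1 ∧ x.toNat = 0) := by omega
  have hy' : (y.toNat : ℤ) = y ∨ (y = -1 ∧ y.toNat = 0) := by omega
  rcases hx' with h1 | ⟨h1, h1'⟩ <;> rcases hy' with h2 | ⟨h2, h2'⟩
  · rw [h1, h2]
  · rw [h2', h2, h1]; simpa using bc2 hu hx
  · rw [h1', h1, h2]; simpa using bc1 hu hy
  · rw [h1', h2', h1, h2]
    have : u (-1) (-1) = u 0 0 := by
      rw [bc1 hu (by norm_num), bc2 hu (by norm_num)]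
    simpa using this

lemma shift1 {g : ℕ → ℝ} (hg : Summable g) {s : ℤ} (hs : -1 ≤ s) :
    Summable fun n : ℕ => g ((n + s).toNat) := by
  rcases (by omega : s = -1 ∨ 0 ≤ s) with h | h
  · subst h
    apply (summable_nat_add_iff 1).mp
    apply hg.congr
    intro n
    congr 1
    omega
  · have hn : ∀ n : ℕ, ((n : ℤ) + s).toNat = n + s.toNat := by intro n; omega
    simp only [hn]
    exact (summable_nat_add_iff s.toNat).mpr hg

lemma shift1_tsum_le {g : ℕ → ℝ} (hg : Summable g) (hg0 : ∀ n, 0 ≤ g n) {s : ℤ}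
    (hs : -1 ≤ s) : ∑' n : ℕ, g ((n + s).toNat) ≤ 2 * ∑' n, g n := by
  have hnn : 0 ≤ ∑' n, g n := tsum_nonneg hg0
  rcases (by omega : s = -1 ∨ 0 ≤ s) with h | h
  · subst h
    rw [Summable.tsum_eq_zero_add (shift1 hg (by norm_num))]
    have e1 : ((0 : ℕ) + (-1 : ℤ)).toNat = 0 := by norm_num
    have e2 : ∀ n : ℕ, (((n + 1 : ℕ) : ℤ) + (-1 : ℤ)).toNat = n := by intro n; omega
    simp only [e1, e2]
    have h0 : g 0 ≤ ∑' n, g n := Summable.le_tsum hg 0 (fun j _ => hg0 j)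
    linarith
  · have hn : ∀ n : ℕ, ((n : ℤ) + s).toNat = n + s.toNat := by intro n; omega
    simp only [hn]
    have h1 : ∑' n : ℕ, g (n + s.toNat) ≤ ∑' n, g n := by
      apply Summable.tsum_le_tsum_of_inj (fun n => n + s.toNat)
        (fun a b hab => by simp only [add_left_inj] at hab; exact hab) (fun c _ => hg0 c) (fun n => le_rfl)
        ((summable_nat_add_iff s.toNat).mpr hg) hg
    linarith

lemma swapSq (hu : memQ u) : Summable fun p : ℕ × ℕ => (u (p.2 : ℤ) (p.1 : ℤ)) ^ 2 := by
  have := (Equiv.prodComm ℕ ℕ).summable_iff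
    (f := fun p : ℕ × ℕ => (u (p.1 : ℤ) (p.2 : ℤ)) ^ 2)
  exact this.mpr hu.2.2

lemma rowSumSq (hu : memQ u) (a : ℕ) : Summable fun k : ℕ => (u (a : ℤ) (k : ℤ)) ^ 2 :=
  hu.2.2.prod_factor a

lemma colSumSq (hu : memQ u) (c : ℕ) : Summable fun j : ℕ => (u (j : ℤ) (c : ℤ)) ^ 2 :=
  (swapSq hu).prod_factor c

lemma marginal (hu : memQ u) : Summable fun j : ℕ => ∑' k : ℕ, (u (j : ℤ) (k : ℤ)) ^ 2 :=
  (hu.2.2.hasSum.prod_fiberwise fun j => (rowSumSq hu j).hasSum).summable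

lemma sumSq (hu : memQ u) {s t : ℤ} (hs : -1 ≤ s) (ht : -1 ≤ t) :
    Summable fun p : ℕ × ℕ => (u ((p.1 : ℤ) + s) ((p.2 : ℤ) + t)) ^ 2 := by
  have hcl : ∀ p : ℕ × ℕ, u ((p.1 : ℤ) + s) ((p.2 : ℤ) + t)
      = u (((p.1 : ℤ) + s).toNat : ℤ) ((((p.2 : ℤ) + t).toNat : ℤ)) :=
    fun p => clamp hu (by omega) (by omega)
  simp only [hcl]
  rw [summable_prod_of_nonneg (fun p => sq_nonneg _)]
  constructor
  · intro j
    exact shift1 (rowSumSq hu ((j + s).toNat)) ht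
  · dsimp only
    have hle : ∀ j : ℕ, (∑' k : ℕ, u (((j : ℤ) + s).toNat : ℤ) ((((k : ℤ) + t).toNat : ℤ)) ^ 2)
        ≤ 2 * ∑' k : ℕ, u (((j : ℤ) + s).toNat : ℤ) (k : ℤ) ^ 2 :=
      fun j => shift1_tsum_le (rowSumSq hu (((j : ℤ) + s).toNat)) (fun k => sq_nonneg _) ht
    exact Summable.of_nonneg_of_le (fun j => tsum_nonneg (fun k => sq_nonneg _)) hle
      ((shift1 (marginal hu) hs).mul_left 2)


lemma absmul_le {x y : ℝ} : |x * y| ≤ (x ^ 2 + y ^ 2) / 2 := by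
  rw [abs_mul]
  nlinarith [sq_nonneg (|x| - |y|), abs_nonneg x, abs_nonneg y, sq_abs x, sq_abs y]

lemma sumMul (hu : memQ u) {s t s' t' : ℤ} (hs : -1 ≤ s) (ht : -1 ≤ t)
    (hs' : -1 ≤ s') (ht' : -1 ≤ t') : Summable (mm u s t s' t') := by
  have h1 := sumSq hu hs ht
  have h2 := sumSq hu hs' ht'
  apply Summable.of_abs
  apply Summable.of_nonneg_of_le (fun p => abs_nonneg _) (fun p => absmul_le)
  exact (h1.add h2).div_const 2

lemma colSq1 (hu : memQ u) {a t : ℤ} (ha : -1 ≤ a) (ht : -1 ≤ t) :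
    Summable fun k : ℕ => (u a ((k : ℤ) + t)) ^ 2 := by
  have h := shift1 (rowSumSq hu a.toNat) ht
  apply h.congr
  intro k
  rw [← clamp hu ha (by omega)]

lemma rowSq1 (hu : memQ u) {s c : ℤ} (hs : -1 ≤ s) (hc : -1 ≤ c) :
    Summable fun j : ℕ => (u ((j : ℤ) + s) c) ^ 2 := by
  have h := shift1 (colSumSq hu c.toNat) hs
  apply h.congr
  intro j
  rw [← clamp hu (by omega) hc]

lemma colMul (hu : memQ u) {a t b t' : ℤ} (ha : -1 ≤ a) (ht : -1 ≤ t)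
    (hb : -1 ≤ b) (ht' : -1 ≤ t') :
    Summable fun k : ℕ => u a ((k : ℤ) + t) * u b ((k : ℤ) + t') := by
  apply Summable.of_abs
  apply Summable.of_nonneg_of_le (fun p => abs_nonneg _) (fun p => absmul_le)
  exact ((colSq1 hu ha ht).add (colSq1 hu hb ht')).div_const 2

lemma rowMul (hu : memQ u) {s c s' c' : ℤ} (hs : -1 ≤ s) (hc : -1 ≤ c)
    (hs' : -1 ≤ s') (hc' : -1 ≤ c') :
    Summable fun j : ℕ => u ((j : ℤ) + s) c * u ((j : ℤ) + s') c' := by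
  apply Summable.of_abs
  apply Summable.of_nonneg_of_le (fun p => abs_nonneg _) (fun p => absmul_le)
  exact ((rowSq1 hu hs hc).add (rowSq1 hu hs' hc')).div_const 2

lemma summable_fst {F : ℕ × ℕ → ℝ} (hF : Summable F) :
    Summable fun j : ℕ => ∑' k : ℕ, F (j, k) :=
  (hF.hasSum.prod_fiberwise fun j => (hF.prod_factor j).hasSum).summable

lemma fubini {F : ℕ × ℕ → ℝ} (hF : Summable F) :
    ∑' p : ℕ × ℕ, F p = ∑' j : ℕ, ∑' k : ℕ, F (j, k) :=
  Summable.tsum_prod' hF fun j => hF.prod_factor j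

lemma shiftJsum {F : ℕ × ℕ → ℝ} (hF : Summable F) :
    Summable fun p : ℕ × ℕ => F (p.1 + 1, p.2) := by
  have hi : Function.Injective (fun p : ℕ × ℕ => (p.1 + 1, p.2)) := by
    intro p q h
    simp only [Prod.mk.injEq, Prod.ext_iff] at h ⊢
    omega
  exact hF.comp_injective hi

lemma swapsum {F : ℕ × ℕ → ℝ} (hF : Summable F) :
    Summable fun p : ℕ × ℕ => F (p.2, p.1) :=
  ((Equiv.prodComm ℕ ℕ).summable_iff (f := F)).mpr hF

lemma swaptsum (F : ℕ × ℕ → ℝ) :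
    ∑' p : ℕ × ℕ, F (p.2, p.1) = ∑' p : ℕ × ℕ, F p :=
  (Equiv.prodComm ℕ ℕ).tsum_eq F

lemma peelJ {F : ℕ × ℕ → ℝ} (hF : Summable F) :
    ∑' p : ℕ × ℕ, F p = (∑' k : ℕ, F (0, k)) + ∑' p : ℕ × ℕ, F (p.1 + 1, p.2) := by
  rw [fubini hF, fubini (shiftJsum hF)]
  exact Summable.tsum_eq_zero_add (summable_fst hF)

lemma peelK {F : ℕ × ℕ → ℝ} (hF : Summable F) :
    ∑' p : ℕ × ℕ, F p = (∑' j : ℕ, F (j, 0)) + ∑' p : ℕ × ℕ, F (p.1, p.2 + 1) := by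
  rw [← swaptsum F, peelJ (swapsum hF), ← swaptsum (fun p => F (p.1, p.2 + 1))]

lemma peelJm (hu : memQ u) (s t s' t' : ℤ) (hs : -1 ≤ s) (ht : -1 ≤ t)
    (hs' : -1 ≤ s') (ht' : -1 ≤ t') :
    SS u s t s' t' = Sc u s t s' t' + SS u (s + 1) t (s' + 1) t' := by
  rw [SS, peelJ (sumMul hu hs ht hs' ht')]
  congr 1
  · apply tsum_congr
    intro k
    simp only [mm, Sc, Nat.cast_zero, zero_add]
  · apply tsum_congr
    intro p
    simp only [mm]
    push_cast
    rw [show ((p.1 : ℤ) + 1) + s = (p.1 : ℤ) + (s + 1) by ring,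
        show ((p.1 : ℤ) + 1) + s' = (p.1 : ℤ) + (s' + 1) by ring]

lemma peelKm (hu : memQ u) (s t s' t' : ℤ) (hs : -1 ≤ s) (ht : -1 ≤ t)
    (hs' : -1 ≤ s') (ht' : -1 ≤ t') :
    SS u s t s' t' = Sr u s t s' t' + SS u s (t + 1) s' (t' + 1) := by
  rw [SS, peelK (sumMul hu hs ht hs' ht')]
  congr 1
  · apply tsum_congr
    intro j
    simp only [mm, Sr, Nat.cast_zero, zero_add]
  · apply tsum_congr
    intro p
    simp only [mm]
    push_cast
    rw [show ((p.2 : ℤ) + 1) + t = (p.2 : ℤ) + (t + 1) by ring,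
        show ((p.2 : ℤ) + 1) + t' = (p.2 : ℤ) + (t' + 1) by ring]

lemma peelScm (hu : memQ u) (a t b t' : ℤ) (ha : -1 ≤ a) (ht : -1 ≤ t)
    (hb : -1 ≤ b) (ht' : -1 ≤ t') :
    Sc u a t b t' = u a t * u b t' + Sc u a (t + 1) b (t' + 1) := by
  rw [Sc, Summable.tsum_eq_zero_add (colMul hu ha ht hb ht')]
  congr 1
  · norm_num
  · apply tsum_congr
    intro k
    push_cast
    rw [show ((k : ℤ) + 1) + t = (k : ℤ) + (t + 1) by ring,
        show ((k : ℤ) + 1) + t' = (k : ℤ) + (t' + 1) by ring]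

lemma peelSrm (hu : memQ u) (s c s' c' : ℤ) (hs : -1 ≤ s) (hc : -1 ≤ c)
    (hs' : -1 ≤ s') (hc' : -1 ≤ c') :
    Sr u s c s' c' = u s c * u s' c' + Sr u (s + 1) c (s' + 1) c' := by
  rw [Sr, Summable.tsum_eq_zero_add (rowMul hu hs hc hs' hc')]
  congr 1
  · norm_num
  · apply tsum_congr
    intro j
    push_cast
    rw [show ((j : ℤ) + 1) + s = (j : ℤ) + (s + 1) by ring,
        show ((j : ℤ) + 1) + s' = (j : ℤ) + (s' + 1) by ring]

lemma commSS (s t s' t' : ℤ) : SS u s t s' t' = SS u s' t' s t :=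
  tsum_congr fun p => mul_comm _ _

lemma commSc (a t b t' : ℤ) : Sc u a t b t' = Sc u b t' a t :=
  tsum_congr fun k => mul_comm _ _

lemma commSr (s c s' c' : ℤ) : Sr u s c s' c' = Sr u s' c' s c :=
  tsum_congr fun j => mul_comm _ _

lemma gScA (hu : memQ u) (t b t' : ℤ) (ht : -1 ≤ t) :
    Sc u (-1) t b t' = Sc u 0 t b t' :=
  tsum_congr fun k => by rw [show u (-1) ((k : ℤ) + t) = u 0 ((k : ℤ) + t) from bc1 hu (by omega)]

lemma gScB (hu : memQ u) (a t t' : ℤ) (ht' : -1 ≤ t') :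
    Sc u a t (-1) t' = Sc u a t 0 t' :=
  tsum_congr fun k => by rw [show u (-1) ((k : ℤ) + t') = u 0 ((k : ℤ) + t') from bc1 hu (by omega)]

lemma gSrA (hu : memQ u) (s s' c' : ℤ) (hs : -1 ≤ s) :
    Sr u s (-1) s' c' = Sr u s 0 s' c' :=
  tsum_congr fun j => by rw [show u ((j : ℤ) + s) (-1) = u ((j : ℤ) + s) 0 from bc2 hu (by omega)]

lemma gSrB (hu : memQ u) (s c s' : ℤ) (hs' : -1 ≤ s') :
    Sr u s c s' (-1) = Sr u s c s' 0 :=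
  tsum_congr fun j => by rw [show u ((j : ℤ) + s') (-1) = u ((j : ℤ) + s') 0 from bc2 hu (by omega)]


section Sig
variable (hu : memQ u)
include hu

lemma sg1 : SS u 1 0 1 0 = SS u 0 0 0 0 - Sc u 0 0 0 0 := by
  have h := peelJm hu 0 0 0 0 (by norm_num) (by norm_num) (by norm_num) (by norm_num)
  norm_num at h
  linarith

lemma sg2 : SS u 1 0 1 1 = SS u 0 0 0 1 - Sc u 0 0 0 1 := by
  have h := peelJm hu 0 0 0 1 (by norm_num) (by norm_num) (by norm_num) (by norm_num)
  norm_num at h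
  linarith

lemma sgA : SS u 1 1 1 0 = SS u 0 0 0 1 - Sc u 0 0 0 1 := by
  have h := peelJm hu 0 1 0 0 (by norm_num) (by norm_num) (by norm_num) (by norm_num)
  norm_num at h
  rw [commSS 0 1 0 0, commSc 0 1 0 0] at h
  linarith

lemma sg3 : SS u 1 0 1 (-1)
    = Sr u 0 0 0 0 - u 0 0 * u 0 0 + SS u 0 0 0 1 - Sc u 0 0 0 1 := by
  have h := peelKm hu 1 0 1 (-1) (by norm_num) (by norm_num) (by norm_num) (by norm_num)
  norm_num at h
  rw [gSrB hu 1 0 1 (by norm_num)] at h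
  have h2 := peelSrm hu 0 0 0 0 (by norm_num) (by norm_num) (by norm_num) (by norm_num)
  norm_num at h2
  have h3 := sgA hu
  linarith

omit hu in
lemma sg4 : SS u 1 0 0 0 = SS u 0 0 1 0 := commSS 1 0 0 0

omit hu in
lemma sg5 : SS u 1 0 0 1 = SS u 0 1 1 0 := commSS 1 0 0 1

lemma sg6 : SS u 1 0 0 (-1) = Sr u 0 0 1 0 + SS u 0 0 1 1 := by
  have h := peelKm hu 1 0 0 (-1) (by norm_num) (by norm_num) (by norm_num) (by norm_num)
  norm_num at h
  rw [gSrB hu 1 0 0 (by norm_num), commSr 1 0 0 0, commSS 1 1 0 0] at h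
  linarith

lemma sg7 : SS u 1 0 (-1) 0 = Sc u 0 0 1 0 + SS u 0 0 2 0 := by
  have h := peelJm hu 1 0 (-1) 0 (by norm_num) (by norm_num) (by norm_num) (by norm_num)
  norm_num at h
  rw [gScB hu 1 0 0 (by norm_num), commSc 1 0 0 0, commSS 2 0 0 0] at h
  linarith

lemma sg8 : SS u 1 0 (-1) 1 = Sc u 0 1 1 0 + SS u 0 1 2 0 := by
  have h := peelJm hu 1 0 (-1) 1 (by norm_num) (by norm_num) (by norm_num) (by norm_num)
  norm_num at h
  rw [gScB hu 1 0 1 (by norm_num), commSc 1 0 0 1, commSS 2 0 0 1] at h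
  linarith

lemma sg9 : SS u 1 0 (-1) (-1)
    = u 0 0 * u 1 0 + Sc u 0 0 1 1 + (Sr u 0 0 2 0 + SS u 0 0 2 1) := by
  have h := peelJm hu 1 0 (-1) (-1) (by norm_num) (by norm_num) (by norm_num) (by norm_num)
  norm_num at h
  rw [gScB hu 1 0 (-1) (by norm_num)] at h
  have h2 := peelScm hu 1 0 0 (-1) (by norm_num) (by norm_num) (by norm_num) (by norm_num)
  norm_num at h2
  rw [show u 0 (-1) = u 0 0 from bc2 hu (by norm_num), commSc 1 1 0 0] at h2
  have h3 := peelKm hu 2 0 0 (-1) (by norm_num) (by norm_num) (by norm_num) (by norm_num)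
  norm_num at h3
  rw [gSrB hu 2 0 0 (by norm_num), commSr 2 0 0 0, commSS 2 1 0 0] at h3
  have h4 : u 1 0 * u 0 0 = u 0 0 * u 1 0 := mul_comm _ _
  linarith

lemma sg10 : SS u (-1) 0 1 0 = Sc u 0 0 1 0 + SS u 0 0 2 0 := by
  have h := peelJm hu (-1) 0 1 0 (by norm_num) (by norm_num) (by norm_num) (by norm_num)
  norm_num at h
  rw [gScA hu 0 1 0 (by norm_num)] at h
  linarith

lemma sg11 : SS u (-1) 0 1 1 = Sc u 0 0 1 1 + SS u 0 0 2 1 := by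
  have h := peelJm hu (-1) 0 1 1 (by norm_num) (by norm_num) (by norm_num) (by norm_num)
  norm_num at h
  rw [gScA hu 0 1 1 (by norm_num)] at h
  linarith

lemma sg12 : SS u (-1) 0 1 (-1)
    = u 0 0 * u 1 0 + Sc u 0 1 1 0 + (Sr u 0 0 2 0 + SS u 0 1 2 0) := by
  have h := peelJm hu (-1) 0 1 (-1) (by norm_num) (by norm_num) (by norm_num) (by norm_num)
  norm_num at h
  rw [gScA hu 0 1 (-1) (by norm_num)] at h
  have h2 := peelScm hu 0 0 1 (-1) (by norm_num) (by norm_num) (by norm_num) (by norm_num)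
  norm_num at h2
  rw [show u 1 (-1) = u 1 0 from bc2 hu (by norm_num)] at h2
  have h3 := peelKm hu 0 0 2 (-1) (by norm_num) (by norm_num) (by norm_num) (by norm_num)
  norm_num at h3
  rw [gSrB hu 0 0 2 (by norm_num)] at h3
  linarith

lemma sg13 : SS u (-1) 0 0 0 = Sc u 0 0 0 0 + SS u 0 0 1 0 := by
  have h := peelJm hu (-1) 0 0 0 (by norm_num) (by norm_num) (by norm_num) (by norm_num)
  norm_num at h
  rw [gScA hu 0 0 0 (by norm_num)] at h
  linarith

lemma sg14 : SS u (-1) 0 0 1 = Sc u 0 0 0 1 + SS u 0 0 1 1 := by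
  have h := peelJm hu (-1) 0 0 1 (by norm_num) (by norm_num) (by norm_num) (by norm_num)
  norm_num at h
  rw [gScA hu 0 0 1 (by norm_num)] at h
  linarith

lemma sg15 : SS u (-1) 0 0 (-1)
    = u 0 0 * u 0 0 + Sc u 0 0 0 1 + (Sr u 0 0 1 0 + SS u 0 1 1 0) := by
  have h := peelJm hu (-1) 0 0 (-1) (by norm_num) (by norm_num) (by norm_num) (by norm_num)
  norm_num at h
  rw [gScA hu 0 0 (-1) (by norm_num)] at h
  have h2 := peelScm hu 0 0 0 (-1) (by norm_num) (by norm_num) (by norm_num) (by norm_num)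
  norm_num at h2
  rw [show u 0 (-1) = u 0 0 from bc2 hu (by norm_num), commSc 0 1 0 0] at h2
  have h3 := peelKm hu 0 0 1 (-1) (by norm_num) (by norm_num) (by norm_num) (by norm_num)
  norm_num at h3
  rw [gSrB hu 0 0 1 (by norm_num)] at h3
  linarith

lemma sg16 : SS u (-1) 0 (-1) 0 = Sc u 0 0 0 0 + SS u 0 0 0 0 := by
  have h := peelJm hu (-1) 0 (-1) 0 (by norm_num) (by norm_num) (by norm_num) (by norm_num)
  norm_num at h
  rw [gScA hu 0 (-1) 0 (by norm_num), gScB hu 0 0 0 (by norm_num)] at h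
  linarith

lemma sg17 : SS u (-1) 0 (-1) 1 = Sc u 0 0 0 1 + SS u 0 0 0 1 := by
  have h := peelJm hu (-1) 0 (-1) 1 (by norm_num) (by norm_num) (by norm_num) (by norm_num)
  norm_num at h
  rw [gScA hu 0 (-1) 1 (by norm_num), gScB hu 0 0 1 (by norm_num)] at h
  linarith

lemma sg18 : SS u (-1) 0 (-1) (-1)
    = u 0 0 * u 0 0 + Sc u 0 0 0 1 + (Sr u 0 0 0 0 + SS u 0 0 0 1) := by
  have h := peelJm hu (-1) 0 (-1) (-1) (by norm_num) (by norm_num) (by norm_num) (by norm_num)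
  norm_num at h
  rw [gScA hu 0 (-1) (-1) (by norm_num), gScB hu 0 0 (-1) (by norm_num)] at h
  have h2 := peelScm hu 0 0 0 (-1) (by norm_num) (by norm_num) (by norm_num) (by norm_num)
  norm_num at h2
  rw [show u 0 (-1) = u 0 0 from bc2 hu (by norm_num), commSc 0 1 0 0] at h2
  have h3 := peelKm hu 0 0 0 (-1) (by norm_num) (by norm_num) (by norm_num) (by norm_num)
  norm_num at h3
  rw [gSrB hu 0 0 0 (by norm_num), commSS 0 1 0 0] at h3
  linarith

end Sig

lemma hP (hu : memQ u) :
    HasSum (fun p : ℕ × ℕ => u (p.1 : ℤ) (p.2 : ℤ) * D10 u (p.1 : ℤ) (p.2 : ℤ))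
      (-(Sc u 0 0 0 0) / 2) := by
  have H : HasSum (fun p : ℕ × ℕ =>
        (1/2 : ℝ) * mm u 0 0 1 0 p + (-(1/2) : ℝ) * mm u 0 0 (-1) 0 p)
      ((1/2 : ℝ) * SS u 0 0 1 0 + (-(1/2) : ℝ) * SS u 0 0 (-1) 0) :=
    ((sumMul hu (by norm_num) (by norm_num) (by norm_num) (by norm_num)).hasSum.mul_left _).add
      ((sumMul hu (by norm_num) (by norm_num) (by norm_num) (by norm_num)).hasSum.mul_left _)
  have he : (fun p : ℕ × ℕ => u (p.1 : ℤ) (p.2 : ℤ) * D10 u (p.1 : ℤ) (p.2 : ℤ))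
      = (fun p : ℕ × ℕ =>
        (1/2 : ℝ) * mm u 0 0 1 0 p + (-(1/2) : ℝ) * mm u 0 0 (-1) 0 p) := by
    funext p
    simp only [mm, D10, D1p, D1m]
    push_cast
    ring_nf
  have hv : (1/2 : ℝ) * SS u 0 0 1 0 + (-(1/2) : ℝ) * SS u 0 0 (-1) 0
      = -(Sc u 0 0 0 0) / 2 := by
    rw [commSS 0 0 (-1) 0, sg13 hu]
    ring
  rw [he]
  exact hv ▸ H


lemma hT1 (hu : memQ u) :
    HasSum (fun p : ℕ × ℕ => D10 u (p.1 : ℤ) (p.2 : ℤ) * L1 u (p.1 : ℤ) (p.2 : ℤ))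
      ((0 : ℝ)) := by
  have H : HasSum (fun p : ℕ × ℕ =>
        (1/2 : ℝ) * mm u 1 0 1 0 p + (-(1) : ℝ) * mm u 1 0 0 0 p + (1/2 : ℝ) * mm u 1 0 (-1) 0 p + (-(1/2) : ℝ) * mm u (-1) 0 1 0 p + (1 : ℝ) * mm u (-1) 0 0 0 p + (-(1/2) : ℝ) * mm u (-1) 0 (-1) 0 p)
      ((1/2 : ℝ) * SS u 1 0 1 0 + (-(1) : ℝ) * SS u 1 0 0 0 + (1/2 : ℝ) * SS u 1 0 (-1) 0 + (-(1/2) : ℝ) * SS u (-1) 0 1 0 + (1 : ℝ) * SS u (-1) 0 0 0 + (-(1/2) : ℝ) * SS u (-1) 0 (-1) 0) :=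
    (((((((sumMul hu (by norm_num) (by norm_num) (by norm_num) (by norm_num)).hasSum.mul_left _).add ((sumMul hu (by norm_num) (by norm_num) (by norm_num) (by norm_num)).hasSum.mul_left _)).add ((sumMul hu (by norm_num) (by norm_num) (by norm_num) (by norm_num)).hasSum.mul_left _)).add ((sumMul hu (by norm_num) (by norm_num) (by norm_num) (by norm_num)).hasSum.mul_left _)).add ((sumMul hu (by norm_num) (by norm_num) (by norm_num) (by norm_num)).hasSum.mul_left _)).add ((sumMul hu (by norm_num) (by norm_num) (by norm_num) (by norm_num)).hasSum.mul_left _))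
  have he : (fun p : ℕ × ℕ => D10 u (p.1 : ℤ) (p.2 : ℤ) * L1 u (p.1 : ℤ) (p.2 : ℤ))
      = (fun p : ℕ × ℕ =>
        (1/2 : ℝ) * mm u 1 0 1 0 p + (-(1) : ℝ) * mm u 1 0 0 0 p + (1/2 : ℝ) * mm u 1 0 (-1) 0 p + (-(1/2) : ℝ) * mm u (-1) 0 1 0 p + (1 : ℝ) * mm u (-1) 0 0 0 p + (-(1/2) : ℝ) * mm u (-1) 0 (-1) 0 p) := by
    funext p
    simp only [mm, D10, D1p, D1m, L1]
    ring_nf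
  have hv : (1/2 : ℝ) * SS u 1 0 1 0 + (-(1) : ℝ) * SS u 1 0 0 0 + (1/2 : ℝ) * SS u 1 0 (-1) 0 + (-(1/2) : ℝ) * SS u (-1) 0 1 0 + (1 : ℝ) * SS u (-1) 0 0 0 + (-(1/2) : ℝ) * SS u (-1) 0 (-1) 0
      = (0 : ℝ) := by
    rw [sg1 hu, sg4, sg7 hu, sg10 hu, sg13 hu, sg16 hu]
    ring
  rw [he]
  exact hv ▸ H

lemma hT2 (hu : memQ u) :
    HasSum (fun p : ℕ × ℕ => D10 u (p.1 : ℤ) (p.2 : ℤ) * L2 u (p.1 : ℤ) (p.2 : ℤ))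
      (Sc u 0 0 0 0 - Sc u 0 0 0 1 - u 0 0 * u 0 0 / 2) := by
  have H : HasSum (fun p : ℕ × ℕ =>
        (1/2 : ℝ) * mm u 1 0 0 1 p + (-(1) : ℝ) * mm u 1 0 0 0 p + (1/2 : ℝ) * mm u 1 0 0 (-1) p + (-(1/2) : ℝ) * mm u (-1) 0 0 1 p + (1 : ℝ) * mm u (-1) 0 0 0 p + (-(1/2) : ℝ) * mm u (-1) 0 0 (-1) p)
      ((1/2 : ℝ) * SS u 1 0 0 1 + (-(1) : ℝ) * SS u 1 0 0 0 + (1/2 : ℝ) * SS u 1 0 0 (-1) + (-(1/2) : ℝ) * SS u (-1) 0 0 1 + (1 : ℝ) * SS u (-1) 0 0 0 + (-(1/2) : ℝ) * SS u (-1) 0 0 (-1)) :=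
    (((((((sumMul hu (by norm_num) (by norm_num) (by norm_num) (by norm_num)).hasSum.mul_left _).add ((sumMul hu (by norm_num) (by norm_num) (by norm_num) (by norm_num)).hasSum.mul_left _)).add ((sumMul hu (by norm_num) (by norm_num) (by norm_num) (by norm_num)).hasSum.mul_left _)).add ((sumMul hu (by norm_num) (by norm_num) (by norm_num) (by norm_num)).hasSum.mul_left _)).add ((sumMul hu (by norm_num) (by norm_num) (by norm_num) (by norm_num)).hasSum.mul_left _)).add ((sumMul hu (by norm_num) (by norm_num) (by norm_num) (by norm_num)).hasSum.mul_left _))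
  have he : (fun p : ℕ × ℕ => D10 u (p.1 : ℤ) (p.2 : ℤ) * L2 u (p.1 : ℤ) (p.2 : ℤ))
      = (fun p : ℕ × ℕ =>
        (1/2 : ℝ) * mm u 1 0 0 1 p + (-(1) : ℝ) * mm u 1 0 0 0 p + (1/2 : ℝ) * mm u 1 0 0 (-1) p + (-(1/2) : ℝ) * mm u (-1) 0 0 1 p + (1 : ℝ) * mm u (-1) 0 0 0 p + (-(1/2) : ℝ) * mm u (-1) 0 0 (-1) p) := by
    funext p
    simp only [mm, D10, D1p, D1m, L2, D2p, D2m]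
    ring_nf
  have hv : (1/2 : ℝ) * SS u 1 0 0 1 + (-(1) : ℝ) * SS u 1 0 0 0 + (1/2 : ℝ) * SS u 1 0 0 (-1) + (-(1/2) : ℝ) * SS u (-1) 0 0 1 + (1 : ℝ) * SS u (-1) 0 0 0 + (-(1/2) : ℝ) * SS u (-1) 0 0 (-1)
      = Sc u 0 0 0 0 - Sc u 0 0 0 1 - u 0 0 * u 0 0 / 2 := by
    rw [sg5, sg4, sg6 hu, sg14 hu, sg13 hu, sg15 hu]
    ring
  rw [he]
  exact hv ▸ H

lemma hT3 (hu : memQ u) :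
    HasSum (fun p : ℕ × ℕ => D10 u (p.1 : ℤ) (p.2 : ℤ) * D10 (D20 u) (p.1 : ℤ) (p.2 : ℤ))
      ((u 0 0 * u 1 0 + Sr u 0 0 2 0 - Sr u 0 0 0 0) / 4) := by
  have H : HasSum (fun p : ℕ × ℕ =>
        (1/8 : ℝ) * mm u 1 0 1 1 p + (-(1/8) : ℝ) * mm u 1 0 1 (-1) p + (-(1/8) : ℝ) * mm u 1 0 (-1) 1 p + (1/8 : ℝ) * mm u 1 0 (-1) (-1) p + (-(1/8) : ℝ) * mm u (-1) 0 1 1 p + (1/8 : ℝ) * mm u (-1) 0 1 (-1) p + (1/8 : ℝ) * mm u (-1) 0 (-1) 1 p + (-(1/8) : ℝ) * mm u (-1) 0 (-1) (-1) p)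
      ((1/8 : ℝ) * SS u 1 0 1 1 + (-(1/8) : ℝ) * SS u 1 0 1 (-1) + (-(1/8) : ℝ) * SS u 1 0 (-1) 1 + (1/8 : ℝ) * SS u 1 0 (-1) (-1) + (-(1/8) : ℝ) * SS u (-1) 0 1 1 + (1/8 : ℝ) * SS u (-1) 0 1 (-1) + (1/8 : ℝ) * SS u (-1) 0 (-1) 1 + (-(1/8) : ℝ) * SS u (-1) 0 (-1) (-1)) :=
    (((((((((sumMul hu (by norm_num) (by norm_num) (by norm_num) (by norm_num)).hasSum.mul_left _).add ((sumMul hu (by norm_num) (by norm_num) (by norm_num) (by norm_num)).hasSum.mul_left _)).add ((sumMul hu (by norm_num) (by norm_num) (by norm_num) (by norm_num)).hasSum.mul_left _)).add ((sumMul hu (by norm_num) (by norm_num) (by norm_num) (by norm_num)).hasSum.mul_left _)).add ((sumMul hu (by norm_num) (by norm_num) (by norm_num) (by norm_num)).hasSum.mul_left _)).add ((sumMul hu (by norm_num) (by norm_num) (by norm_num) (by norm_num)).hasSum.mul_left _)).add ((sumMul hu (by norm_num) (by norm_num) (by norm_num) (by norm_num)).hasSum.mul_left _)).add ((sumMul hu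 (by norm_num) (by norm_num) (by norm_num) (by norm_num)).hasSum.mul_left _))
  have he : (fun p : ℕ × ℕ => D10 u (p.1 : ℤ) (p.2 : ℤ) * D10 (D20 u) (p.1 : ℤ) (p.2 : ℤ))
      = (fun p : ℕ × ℕ =>
        (1/8 : ℝ) * mm u 1 0 1 1 p + (-(1/8) : ℝ) * mm u 1 0 1 (-1) p + (-(1/8) : ℝ) * mm u 1 0 (-1) 1 p + (1/8 : ℝ) * mm u 1 0 (-1) (-1) p + (-(1/8) : ℝ) * mm u (-1) 0 1 1 p + (1/8 : ℝ) * mm u (-1) 0 1 (-1) p + (1/8 : ℝ) * mm u (-1) 0 (-1) 1 p + (-(1/8) : ℝ) * mm u (-1) 0 (-1) (-1) p) := by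
    funext p
    simp only [mm, D10, D1p, D1m, D20, D2p, D2m]
    ring_nf
  have hv : (1/8 : ℝ) * SS u 1 0 1 1 + (-(1/8) : ℝ) * SS u 1 0 1 (-1) + (-(1/8) : ℝ) * SS u 1 0 (-1) 1 + (1/8 : ℝ) * SS u 1 0 (-1) (-1) + (-(1/8) : ℝ) * SS u (-1) 0 1 1 + (1/8 : ℝ) * SS u (-1) 0 1 (-1) + (1/8 : ℝ) * SS u (-1) 0 (-1) 1 + (-(1/8) : ℝ) * SS u (-1) 0 (-1) (-1)
      = (u 0 0 * u 1 0 + Sr u 0 0 2 0 - Sr u 0 0 0 0) / 4 := by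
    rw [sg2 hu, sg3 hu, sg8 hu, sg9 hu, sg11 hu, sg12 hu, sg17 hu, sg18 hu]
    ring
  rw [he]
  exact hv ▸ H

lemma hT4 (hu : memQ u) :
    HasSum (fun p : ℕ × ℕ => D10 u (p.1 : ℤ) (p.2 : ℤ) * L1 (L2 u) (p.1 : ℤ) (p.2 : ℤ))
      ((0 : ℝ)) := by
  have H : HasSum (fun p : ℕ × ℕ =>
        (1/2 : ℝ) * mm u 1 0 1 1 p + (-(1) : ℝ) * mm u 1 0 1 0 p + (1/2 : ℝ) * mm u 1 0 1 (-1) p + (-(1) : ℝ) * mm u 1 0 0 1 p + (2 : ℝ) * mm u 1 0 0 0 p + (-(1) : ℝ) * mm u 1 0 0 (-1) p + (1/2 : ℝ) * mm u 1 0 (-1) 1 p + (-(1) : ℝ) * mm u 1 0 (-1) 0 p + (1/2 : ℝ) * mm u 1 0 (-1) (-1) p + (-(1/2) : ℝ) * mm u (-1) 0 1 1 p + (1 : ℝ) * mm u (-1) 0 1 0 p + (-(1/2) : ℝ) * mm u (-1) 0 1 (-1) p + (1 : ℝ) * mm u (-1) 0 0 1 p + (-(2) : ℝ) * mm u (-1)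 0 0 0 p + (1 : ℝ) * mm u (-1) 0 0 (-1) p + (-(1/2) : ℝ) * mm u (-1) 0 (-1) 1 p + (1 : ℝ) * mm u (-1) 0 (-1) 0 p + (-(1/2) : ℝ) * mm u (-1) 0 (-1) (-1) p)
      ((1/2 : ℝ) * SS u 1 0 1 1 + (-(1) : ℝ) * SS u 1 0 1 0 + (1/2 : ℝ) * SS u 1 0 1 (-1) + (-(1) : ℝ) * SS u 1 0 0 1 + (2 : ℝ) * SS u 1 0 0 0 + (-(1) : ℝ) * SS u 1 0 0 (-1) + (1/2 : ℝ) * SS u 1 0 (-1) 1 + (-(1) : ℝ) * SS u 1 0 (-1) 0 + (1/2 : ℝ) * SS u 1 0 (-1) (-1) + (-(1/2) : ℝ) * SS u (-1) 0 1 1 + (1 : ℝ) * SS u (-1) 0 1 0 + (-(1/2) : ℝ) * SS u (-1) 0 1 (-1) + (1 : ℝ) * SS u (-1) 0 0 1 + (-(2) : ℝ) * SS u (-1) 0 0 0 + (1 : ℝ) * SS u (-1) 0 0 (-1) + (-(1/2) : ℝ) * SS u (-1) 0 (-1) 1 + (1 : ℝ) * SS u (-1) 0 (-1) 0 + (-(1/2)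 : ℝ) * SS u (-1) 0 (-1) (-1)) :=
    (((((((((((((((((((sumMul hu (by norm_num) (by norm_num) (by norm_num) (by norm_num)).hasSum.mul_left _).add ((sumMul hu (by norm_num) (by norm_num) (by norm_num) (by norm_num)).hasSum.mul_left _)).add ((sumMul hu (by norm_num) (by norm_num) (by norm_num) (by norm_num)).hasSum.mul_left _)).add ((sumMul hu (by norm_num) (by norm_num) (by norm_num) (by norm_num)).hasSum.mul_left _)).add ((sumMul hu (by norm_num) (by norm_num) (by norm_num) (by norm_num)).hasSum.mul_left _)).add ((sumMul hu (by norm_num) (by norm_num) (by norm_num) (by norm_num)).hasSum.mul_left _)).add ((sumMul hu (by norm_num) (by norm_num) (by norm_num) (by norm_num)).hasSum.mul_left _)).add ((sumMul hu (by norm_num) (by norm_num) (by norm_num) (by norm_num)).hasSum.mul_left _)).add ((sumMul hu (by norm_num) (by norm_num) (by norm_num) (by norm_num)).hasSum.mul_left _)).add ((sumMul hu (by norm_num) (by norm_num) (by norm_num) (by norm_num)).hasSum.mul_left _)).add ((sumMul hu (by norm_num) (by norm_num) (by norm_num) (by norm_num)).hasSum.mul_left _)).add ((sumMul hu (by norm_num)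 (by norm_num) (by norm_num) (by norm_num)).hasSum.mul_left _)).add ((sumMul hu (by norm_num) (by norm_num) (by norm_num) (by norm_num)).hasSum.mul_left _)).add ((sumMul hu (by norm_num) (by norm_num) (by norm_num) (by norm_num)).hasSum.mul_left _)).add ((sumMul hu (by norm_num) (by norm_num) (by norm_num) (by norm_num)).hasSum.mul_left _)).add ((sumMul hu (by norm_num) (by norm_num) (by norm_num) (by norm_num)).hasSum.mul_left _)).add ((sumMul hu (by norm_num) (by norm_num) (by norm_num) (by norm_num)).hasSum.mul_left _)).add ((sumMul hu (by norm_num) (by norm_num) (by norm_num) (by norm_num)).hasSum.mul_left _))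
  have he : (fun p : ℕ × ℕ => D10 u (p.1 : ℤ) (p.2 : ℤ) * L1 (L2 u) (p.1 : ℤ) (p.2 : ℤ))
      = (fun p : ℕ × ℕ =>
        (1/2 : ℝ) * mm u 1 0 1 1 p + (-(1) : ℝ) * mm u 1 0 1 0 p + (1/2 : ℝ) * mm u 1 0 1 (-1) p + (-(1) : ℝ) * mm u 1 0 0 1 p + (2 : ℝ) * mm u 1 0 0 0 p + (-(1) : ℝ) * mm u 1 0 0 (-1) p + (1/2 : ℝ) * mm u 1 0 (-1) 1 p + (-(1) : ℝ) * mm u 1 0 (-1) 0 p + (1/2 : ℝ) * mm u 1 0 (-1) (-1) p + (-(1/2) : ℝ) * mm u (-1) 0 1 1 p + (1 : ℝ) * mm u (-1) 0 1 0 p + (-(1/2) : ℝ) * mm u (-1) 0 1 (-1) p + (1 : ℝ) * mm u (-1) 0 0 1 p + (-(2) : ℝ) * mm u (-1) 0 0 0 p + (1 : ℝ) * mm u (-1) 0 0 (-1) p + (-(1/2) : ℝ) * mm u (-1) 0 (-1) 1 p + (1 : ℝ) * mm u (-1) 0 (-1) 0 p + (-(1/2) : ℝ) * mm u (-1) 0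 (-1) (-1) p) := by
    funext p
    simp only [mm, D10, D1p, D1m, L1, L2, D2p, D2m]
    ring_nf
  have hv : (1/2 : ℝ) * SS u 1 0 1 1 + (-(1) : ℝ) * SS u 1 0 1 0 + (1/2 : ℝ) * SS u 1 0 1 (-1) + (-(1) : ℝ) * SS u 1 0 0 1 + (2 : ℝ) * SS u 1 0 0 0 + (-(1) : ℝ) * SS u 1 0 0 (-1) + (1/2 : ℝ) * SS u 1 0 (-1) 1 + (-(1) : ℝ) * SS u 1 0 (-1) 0 + (1/2 : ℝ) * SS u 1 0 (-1) (-1) + (-(1/2) : ℝ) * SS u (-1) 0 1 1 + (1 : ℝ) * SS u (-1) 0 1 0 + (-(1/2) : ℝ) * SS u (-1) 0 1 (-1) + (1 : ℝ) * SS u (-1) 0 0 1 + (-(2) : ℝ) * SS u (-1) 0 0 0 + (1 : ℝ) * SS u (-1) 0 0 (-1) + (-(1/2) : ℝ) * SS u (-1) 0 (-1) 1 + (1 : ℝ) * SS u (-1) 0 (-1) 0 + (-(1/2) : ℝ) * SS u (-1) 0 (-1) (-1)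
      = (0 : ℝ) := by
    rw [sg2 hu, sg1 hu, sg3 hu, sg5, sg4, sg6 hu, sg8 hu, sg7 hu, sg9 hu, sg11 hu, sg10 hu, sg12 hu, sg14 hu, sg13 hu, sg15 hu, sg17 hu, sg16 hu, sg18 hu]
    ring
  rw [he]
  exact hv ▸ H


lemma swap_memQ (hu : memQ u) : memQ (fun j k => u k j) := by
  refine ⟨?_, ?_, ?_⟩
  · intro k hk
    exact bc2 hu hk
  · intro j hj
    exact bc1 hu (by omega)
  · exact swapSq hu

lemma mirrorHS' {f g : ℕ × ℕ → ℝ} {a : ℝ} (h : HasSum f a)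
    (hfg : ∀ p : ℕ × ℕ, f (p.2, p.1) = g p) : HasSum g a := by
  have h2 := ((Equiv.prodComm ℕ ℕ).hasSum_iff (f := f)).mpr h
  have he : (f ∘ (Equiv.prodComm ℕ ℕ)) = g := by
    funext p
    exact hfg p
  rwa [he] at h2

lemma hP2 (hu : memQ u) :
    HasSum (fun p : ℕ × ℕ => u (p.1 : ℤ) (p.2 : ℤ) * D20 u (p.1 : ℤ) (p.2 : ℤ))
      (-(Sr u 0 0 0 0) / 2) := by
  refine mirrorHS' (hP (swap_memQ hu)) fun p => ?_
  simp only [D10, D20, D1p, D1m, D2p, D2m]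

lemma hT5 (hu : memQ u) :
    HasSum (fun p : ℕ × ℕ => D20 u (p.1 : ℤ) (p.2 : ℤ) * L1 u (p.1 : ℤ) (p.2 : ℤ))
      (Sr u 0 0 0 0 - Sr u 0 0 1 0 - u 0 0 * u 0 0 / 2) := by
  refine mirrorHS' (hT2 (swap_memQ hu)) fun p => ?_
  simp only [D10, D20, D1p, D1m, D2p, D2m, L1, L2]

lemma hT6 (hu : memQ u) :
    HasSum (fun p : ℕ × ℕ => D20 u (p.1 : ℤ) (p.2 : ℤ) * L2 u (p.1 : ℤ) (p.2 : ℤ))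
      (0 : ℝ) := by
  refine mirrorHS' (hT1 (swap_memQ hu)) fun p => ?_
  simp only [D10, D20, D1p, D1m, D2p, D2m, L1, L2]

lemma hT7 (hu : memQ u) :
    HasSum (fun p : ℕ × ℕ => D20 u (p.1 : ℤ) (p.2 : ℤ) * D10 (D20 u) (p.1 : ℤ) (p.2 : ℤ))
      ((u 0 0 * u 0 1 + Sc u 0 0 0 2 - Sc u 0 0 0 0) / 4) := by
  refine mirrorHS' (hT3 (swap_memQ hu)) fun p => ?_
  simp only [D10, D20, D1p, D1m, D2p, D2m]
  ring

lemma hT8 (hu : memQ u) :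
    HasSum (fun p : ℕ × ℕ => D20 u (p.1 : ℤ) (p.2 : ℤ) * L1 (L2 u) (p.1 : ℤ) (p.2 : ℤ))
      (0 : ℝ) := by
  refine mirrorHS' (hT4 (swap_memQ hu)) fun p => ?_
  simp only [D10, D20, D1p, D1m, D2p, D2m, L1, L2]
  ring


lemma hR1 (hu : memQ u) :
    HasSum (fun k : ℕ => u 0 (k : ℤ) * L2 u 0 ((k : ℤ) + 1))
      (Sc u 0 0 0 2 - 2 * Sc u 0 0 0 1 + Sc u 0 0 0 0) := by
  have H : HasSum (fun k : ℕ =>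
        (1 : ℝ) * (u 0 ((k : ℤ) + 0) * u 0 ((k : ℤ) + 2))
          + (-2 : ℝ) * (u 0 ((k : ℤ) + 0) * u 0 ((k : ℤ) + 1))
          + (1 : ℝ) * (u 0 ((k : ℤ) + 0) * u 0 ((k : ℤ) + 0)))
      ((1 : ℝ) * Sc u 0 0 0 2 + (-2 : ℝ) * Sc u 0 0 0 1 + (1 : ℝ) * Sc u 0 0 0 0) :=
    (((colMul hu (by norm_num) (by norm_num) (by norm_num) (by norm_num)).hasSum.mul_left _).add
      ((colMul hu (by norm_num) (by norm_num) (by norm_num) (by norm_num)).hasSum.mul_left _)).add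
      ((colMul hu (by norm_num) (by norm_num) (by norm_num) (by norm_num)).hasSum.mul_left _)
  have he : (fun k : ℕ => u 0 (k : ℤ) * L2 u 0 ((k : ℤ) + 1))
      = (fun k : ℕ =>
        (1 : ℝ) * (u 0 ((k : ℤ) + 0) * u 0 ((k : ℤ) + 2))
          + (-2 : ℝ) * (u 0 ((k : ℤ) + 0) * u 0 ((k : ℤ) + 1))
          + (1 : ℝ) * (u 0 ((k : ℤ) + 0) * u 0 ((k : ℤ) + 0))) := by
    funext k
    simp only [L2, D2p, D2m]
    ring_nf
  rw [he]
  convert H using 1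
  ring

lemma hR2 (hu : memQ u) :
    HasSum (fun j : ℕ => u (j : ℤ) 0 * L1 u ((j : ℤ) + 1) 0)
      (Sr u 0 0 2 0 - 2 * Sr u 0 0 1 0 + Sr u 0 0 0 0) := by
  have H : HasSum (fun j : ℕ =>
        (1 : ℝ) * (u ((j : ℤ) + 0) 0 * u ((j : ℤ) + 2) 0)
          + (-2 : ℝ) * (u ((j : ℤ) + 0) 0 * u ((j : ℤ) + 1) 0)
          + (1 : ℝ) * (u ((j : ℤ) + 0) 0 * u ((j : ℤ) + 0) 0))
      ((1 : ℝ) * Sr u 0 0 2 0 + (-2 : ℝ) * Sr u 0 0 1 0 + (1 : ℝ) * Sr u 0 0 0 0) :=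
    (((rowMul hu (by norm_num) (by norm_num) (by norm_num) (by norm_num)).hasSum.mul_left _).add
      ((rowMul hu (by norm_num) (by norm_num) (by norm_num) (by norm_num)).hasSum.mul_left _)).add
      ((rowMul hu (by norm_num) (by norm_num) (by norm_num) (by norm_num)).hasSum.mul_left _)
  have he : (fun j : ℕ => u (j : ℤ) 0 * L1 u ((j : ℤ) + 1) 0)
      = (fun j : ℕ =>
        (1 : ℝ) * (u ((j : ℤ) + 0) 0 * u ((j : ℤ) + 2) 0)
          + (-2 : ℝ) * (u ((j : ℤ) + 0) 0 * u ((j : ℤ) + 1) 0)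
          + (1 : ℝ) * (u ((j : ℤ) + 0) 0 * u ((j : ℤ) + 0) 0)) := by
    funext j
    simp only [L1, D1p, D1m]
    ring_nf
  rw [he]
  convert H using 1
  ring

lemma cL1 (hu : memQ u) : u 0 0 * L1 u 0 0 = u 0 0 * u 1 0 - u 0 0 * u 0 0 := by
  simp only [L1, D1p, D1m]
  have h : u (0 - 1 : ℤ) 0 = u 0 0 := by
    rw [show (0 : ℤ) - 1 = -1 by ring]
    exact bc1 hu (by norm_num)
  rw [h, show (0 : ℤ) + 1 = 1 by ring]
  ring

lemma cL2 (hu : memQ u) : u 0 0 * L2 u 0 0 = u 0 0 * u 0 1 - u 0 0 * u 0 0 := by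
  simp only [L2, D2p, D2m]
  have h : u 0 (0 - 1 : ℤ) = u 0 0 := by
    rw [show (0 : ℤ) - 1 = -1 by ring]
    exact bc2 hu (by norm_num)
  rw [h, show (0 : ℤ) + 1 = 1 by ring]
  ring

lemma eSc (hu : memQ u) : (∑' k : ℕ, (u 0 (k : ℤ)) ^ 2) = Sc u 0 0 0 0 := by
  rw [Sc]
  refine tsum_congr fun k => ?_
  ring_nf

lemma eSr (hu : memQ u) : (∑' j : ℕ, (u (j : ℤ) 0) ^ 2) = Sr u 0 0 0 0 := by
  rw [Sr]
  refine tsum_congr fun j => ?_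
  ring_nf

end QS

/-- Lemma 9: boundary terms produced by the skew-selfadjoint part and by the
scalar product of `v` and `w` in the quarter-space. -/
theorem quarterspace_lemma9 (a b lam mu : ℝ) (ha : a < 0) (hb : b < 0)
    (hlam : 0 < lam) (hmu : 0 < mu) (u : ℤ → ℤ → ℝ) (hu : memQ u) :
    2 * ipQ u (vop (lam * a) (mu * b) u) =
      -(lam * |a|) * (∑' k : ℕ, (u 0 (k : ℤ)) ^ 2)
        - mu * |b| * (∑' j : ℕ, (u (j : ℤ) 0) ^ 2) ∧
    2 * ipQ (vop (lam * a) (mu * b) u) (wop (lam * a) (mu * b) u) =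
      -(lam * |a| * (mu * b) ^ 2 / 2) * (∑' k : ℕ, u 0 (k : ℤ) * L2 u 0 ((k : ℤ) + 1))
        - (lam * a) ^ 2 * (mu * |b|) / 2 * (∑' j : ℕ, u (j : ℤ) 0 * L1 u ((j : ℤ) + 1) 0)
        - lam * |a| * (mu * b) ^ 2 / 2 * (u 0 0 * L2 u 0 0)
        - (lam * a) ^ 2 * (mu * |b|) / 2 * (u 0 0 * L1 u 0 0) := by
  constructor
  · -- part (i)
    have H : HasSum (fun p : ℕ × ℕ =>
          u (p.1 : ℤ) (p.2 : ℤ) * vop (lam * a) (mu * b) u (p.1 : ℤ) (p.2 : ℤ))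
        ((-(lam * a)) * (-(QS.Sc u 0 0 0 0) / 2) + (-(mu * b)) * (-(QS.Sr u 0 0 0 0) / 2)) := by
      have h := ((QS.hP hu).mul_left (-(lam * a))).add ((QS.hP2 hu).mul_left (-(mu * b)))
      have he : (fun p : ℕ × ℕ =>
            -(lam * a) * (u (p.1 : ℤ) (p.2 : ℤ) * D10 u (p.1 : ℤ) (p.2 : ℤ))
              + -(mu * b) * (u (p.1 : ℤ) (p.2 : ℤ) * D20 u (p.1 : ℤ) (p.2 : ℤ)))
          = (fun p : ℕ × ℕ =>
            u (p.1 : ℤ) (p.2 : ℤ) * vop (lam * a) (mu * b) u (p.1 : ℤ) (p.2 : ℤ)) := by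
        funext p
        simp only [vop]
        ring
      rwa [he] at h
    have hip : ipQ u (vop (lam * a) (mu * b) u)
        = ((-(lam * a)) * (-(QS.Sc u 0 0 0 0) / 2) + (-(mu * b)) * (-(QS.Sr u 0 0 0 0) / 2)) :=
      H.tsum_eq
    rw [hip, QS.eSc hu, QS.eSr hu, abs_of_neg ha, abs_of_neg hb]
    ring
  · -- part (ii)
    have H : HasSum (fun p : ℕ × ℕ =>
          vop (lam * a) (mu * b) u (p.1 : ℤ) (p.2 : ℤ)
            * wop (lam * a) (mu * b) u (p.1 : ℤ) (p.2 : ℤ))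
        ((lam * a) ^ 3 / 2 * (0 : ℝ)
          + (lam * a) * (mu * b) ^ 2 / 2
            * (QS.Sc u 0 0 0 0 - QS.Sc u 0 0 0 1 - u 0 0 * u 0 0 / 2)
          + (lam * a) ^ 2 * (mu * b)
            * ((u 0 0 * u 1 0 + QS.Sr u 0 0 2 0 - QS.Sr u 0 0 0 0) / 4)
          + (-((lam * a) * ((lam * a) ^ 2 + (mu * b) ^ 2) / 8)) * (0 : ℝ)
          + (lam * a) ^ 2 * (mu * b) / 2
            * (QS.Sr u 0 0 0 0 - QS.Sr u 0 0 1 0 - u 0 0 * u 0 0 / 2)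
          + (mu * b) ^ 3 / 2 * (0 : ℝ)
          + (lam * a) * (mu * b) ^ 2
            * ((u 0 0 * u 0 1 + QS.Sc u 0 0 0 2 - QS.Sc u 0 0 0 0) / 4)
          + (-((mu * b) * ((lam * a) ^ 2 + (mu * b) ^ 2) / 8)) * (0 : ℝ)) := by
      have h :=
        ((((((((QS.hT1 hu).mul_left ((lam * a) ^ 3 / 2)).add
          ((QS.hT2 hu).mul_left ((lam * a) * (mu * b) ^ 2 / 2))).add
          ((QS.hT3 hu).mul_left ((lam * a) ^ 2 * (mu * b)))).add
          ((QS.hT4 hu).mul_left (-((lam * a) * ((lam * a) ^ 2 + (mu * b) ^ 2) / 8)))).add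
          ((QS.hT5 hu).mul_left ((lam * a) ^ 2 * (mu * b) / 2))).add
          ((QS.hT6 hu).mul_left ((mu * b) ^ 3 / 2))).add
          ((QS.hT7 hu).mul_left ((lam * a) * (mu * b) ^ 2))).add
          ((QS.hT8 hu).mul_left (-((mu * b) * ((lam * a) ^ 2 + (mu * b) ^ 2) / 8)))
      have he : (fun p : ℕ × ℕ =>
            (lam * a) ^ 3 / 2 * (D10 u (p.1 : ℤ) (p.2 : ℤ) * L1 u (p.1 : ℤ) (p.2 : ℤ))
              + (lam * a) * (mu * b) ^ 2 / 2
                * (D10 u (p.1 : ℤ) (p.2 : ℤ) * L2 u (p.1 : ℤ) (p.2 : ℤ))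
              + (lam * a) ^ 2 * (mu * b)
                * (D10 u (p.1 : ℤ) (p.2 : ℤ) * D10 (D20 u) (p.1 : ℤ) (p.2 : ℤ))
              + (-((lam * a) * ((lam * a) ^ 2 + (mu * b) ^ 2) / 8))
                * (D10 u (p.1 : ℤ) (p.2 : ℤ) * L1 (L2 u) (p.1 : ℤ) (p.2 : ℤ))
              + (lam * a) ^ 2 * (mu * b) / 2
                * (D20 u (p.1 : ℤ) (p.2 : ℤ) * L1 u (p.1 : ℤ) (p.2 : ℤ))
              + (mu * b) ^ 3 / 2
                * (D20 u (p.1 : ℤ) (p.2 : ℤ) * L2 u (p.1 : ℤ) (p.2 : ℤ))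
              + (lam * a) * (mu * b) ^ 2
                * (D20 u (p.1 : ℤ) (p.2 : ℤ) * D10 (D20 u) (p.1 : ℤ) (p.2 : ℤ))
              + (-((mu * b) * ((lam * a) ^ 2 + (mu * b) ^ 2) / 8))
                * (D20 u (p.1 : ℤ) (p.2 : ℤ) * L1 (L2 u) (p.1 : ℤ) (p.2 : ℤ)))
          = (fun p : ℕ × ℕ =>
            vop (lam * a) (mu * b) u (p.1 : ℤ) (p.2 : ℤ)
              * wop (lam * a) (mu * b) u (p.1 : ℤ) (p.2 : ℤ)) := by
        funext p
        simp only [vop, wop, D10, D20, L1, L2, D1p, D1m, D2p, D2m]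
        ring
      rwa [he] at h
    have hip : ipQ (vop (lam * a) (mu * b) u) (wop (lam * a) (mu * b) u)
        = ((lam * a) ^ 3 / 2 * (0 : ℝ)
          + (lam * a) * (mu * b) ^ 2 / 2
            * (QS.Sc u 0 0 0 0 - QS.Sc u 0 0 0 1 - u 0 0 * u 0 0 / 2)
          + (lam * a) ^ 2 * (mu * b)
            * ((u 0 0 * u 1 0 + QS.Sr u 0 0 2 0 - QS.Sr u 0 0 0 0) / 4)
          + (-((lam * a) * ((lam * a) ^ 2 + (mu * b) ^ 2) / 8)) * (0 : ℝ)
          + (lam * a) ^ 2 * (mu * b) / 2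
            * (QS.Sr u 0 0 0 0 - QS.Sr u 0 0 1 0 - u 0 0 * u 0 0 / 2)
          + (mu * b) ^ 3 / 2 * (0 : ℝ)
          + (lam * a) * (mu * b) ^ 2
            * ((u 0 0 * u 0 1 + QS.Sc u 0 0 0 2 - QS.Sc u 0 0 0 0) / 4)
          + (-((mu * b) * ((lam * a) ^ 2 + (mu * b) ^ 2) / 8)) * (0 : ℝ)) := H.tsum_eq
    rw [hip, (QS.hR1 hu).tsum_eq, (QS.hR2 hu).tsum_eq, QS.cL1 hu, QS.cL2 hu,
      abs_of_neg ha, abs_of_neg hb]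
    ring
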